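/- Let H ∈ (1/2, 1) and t > 0. Define e_{s,t}(x₁, x₂) = ∫_0^t ∫_0^t (u - x₁)₊^{H/2 - 1} (v - x₂)₊^{H/2 - 1} |u - s|^{H-1} |v - s|^{H-1} du dv for s ≥ t and (x₁, x₂) ∈ ℝ². Then e_{t,t} ∈ L²(ℝ²), and ‖(1/ε) ∫_t^{t+ε} e_{s,t} ds − e_{t,t}‖_{L²(ℝ²)} → 0 as ε → 0⁺. -/

import Mathlib

open MeasureTheory Filter

/-- `(x)₊^γ`: `x ^ γ` if `x > 0`, and `0` otherwise. -/
noncomputable def pospow (x γ : ℝ) : ℝ := if 0 < x then x ^ γ else 0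

/-- The kernel `e_{s,t}(x₁,x₂)
  = ∫_0^t ∫_0^t (u-x₁)₊^{H/2-1} (v-x₂)₊^{H/2-1} |u-s|^{H-1} |v-s|^{H-1} du dv`. -/
noncomputable def eKer (H t s : ℝ) (x : ℝ × ℝ) : ℝ :=
  ∫ u in (0:ℝ)..t, ∫ v in (0:ℝ)..t,
    pospow (u - x.1) (H/2 - 1) * pospow (v - x.2) (H/2 - 1)
      * |u - s| ^ (H - 1) * |v - s| ^ (H - 1)

open Set Topology
open scoped ENNReal

/-!
For `s ≥ t` the kernel factorises as `e_{s,t}(x) = g_s(x₁) g_s(x₂)` with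
`g_s(y) = ∫₀ᵗ (u - y)₊^{H/2-1} |u - s|^{H-1} du`, and since `|u - s| ≥ t - u` on `[0, t]` and
`H - 1 < 0`, we get `|g_s| ≤ g_t`. Splitting the integral at the midpoint of `[y, t]` bounds `g_t(y)`
by a multiple of `(t - y)^{3H/2-1}` for `y < t` (a Beta integral), while `g_t(y) ≲ |y|^{H/2-1}`
as `y → -∞` and `g_t = 0` on `[t, ∞)`; both bounds are square integrable, so `g_t ∈ L²(ℝ)` and
`e_{t,t} = g_t ⊗ g_t ∈ L²(ℝ²)`. Dominated convergence makes `s ↦ g_s(y)` continuous on `[t, ∞)`,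
so by the fundamental theorem of calculus the averages converge pointwise to `e_{t,t}`; they are
dominated by `2 g_t ⊗ g_t`, and dominated convergence in `L²` concludes.
-/

theorem tendsto_average_sub_of_continuousOn {f : ℝ → ℝ} {t : ℝ} (hf : ContinuousOn f (Ici t)) :
    Tendsto (fun ε : ℝ => (1 / ε) * (∫ s in t..(t + ε), f s) - f t) (𝓝[>] 0) (𝓝 0) := by
  have hderiv : HasDerivWithinAt (fun u => ∫ s in t..u, f s) (f t) (Ioi t) t :=
    (intervalIntegral.integral_hasDerivWithinAt_right (s := Ici t) IntervalIntegrable.refl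
      (hf.stronglyMeasurableAtFilter_nhdsWithin measurableSet_Ici t |>.filter_mono
        (nhdsWithin_mono _ Ioi_subset_Ici_self))
      ((hf t self_mem_Ici).mono Ioi_subset_Ici_self)).mono Ioi_subset_Ici_self
  have hshift : Tendsto (t + ·) (𝓝[>] 0) (𝓝[>] t) := by
    have h := (map_add_left_nhdsGT (c := t) (a := (0 : ℝ))).le
    rwa [add_zero] at h
  have hslope := ((hasDerivWithinAt_iff_tendsto_slope' (lt_irrefl t)).1 hderiv).comp hshift
  simpa [Function.comp_def, slope_def_field, div_eq_inv_mul] using hslope.sub_const (f t)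

theorem abs_average_sub_le {f : ℝ → ℝ} {t ε M : ℝ} (hε : 0 < ε)
    (hM : ∀ s ∈ Ioc t (t + ε), |f s| ≤ M) (ht : |f t| ≤ M) :
    |(1 / ε) * (∫ s in t..(t + ε), f s) - f t| ≤ 2 * M := by
  have hint : |∫ s in t..(t + ε), f s| ≤ M * ε := by
    simpa [abs_of_pos hε] using intervalIntegral.norm_integral_le_of_norm_le_const (f := f)
      (a := t) (b := t + ε) (C := M) (by simpa [uIoc_of_le (by linarith : t ≤ t + ε)] using hM)
  calc |(1 / ε) * (∫ s in t..(t + ε), f s) - f t|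
      ≤ (1 / ε) * |∫ s in t..(t + ε), f s| + |f t| := by
        simpa only [abs_mul, abs_of_pos (one_div_pos.2 hε)] using
          abs_sub ((1 / ε) * ∫ s in t..(t + ε), f s) (f t)
    _ ≤ (1 / ε) * (M * ε) + M := by gcongr
    _ = 2 * M := by field_simp; ring

theorem tendsto_eLpNorm_of_dominated {α E ι : Type*} [MeasurableSpace α] {μ : Measure α}
    [NormedAddCommGroup E] {l : Filter ι} [l.IsCountablyGenerated] {F : ι → α → E}
    {bound : α → ℝ} {p : ℝ≥0∞} (hp : p ≠ ∞)
    (hF_meas : ∀ᶠ i in l, AEStronglyMeasurable (F i) μ)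
    (h_bound : ∀ᶠ i in l, ∀ᵐ x ∂μ, ‖F i x‖ ≤ bound x) (h_bound_memLp : MemLp bound p μ)
    (h_lim : ∀ᵐ x ∂μ, Tendsto (fun i => F i x) l (𝓝 0)) :
    Tendsto (fun i => eLpNorm (F i) p μ) l (𝓝 0) := by
  rcases eq_or_ne p 0 with rfl | hp0
  · simpa using tendsto_const_nhds
  have hq : 0 < p.toReal := ENNReal.toReal_pos hp0 hp
  simp_rw [eLpNorm_eq_lintegral_rpow_enorm_toReal hp0 hp]
  have hlint : Tendsto (fun i => ∫⁻ x, ‖F i x‖ₑ ^ p.toReal ∂μ) l (𝓝 0) := by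
    simpa using tendsto_lintegral_filter_of_dominated_convergence' (f := fun _ => 0)
      (fun x => ‖bound x‖ₑ ^ p.toReal)
      (hF_meas.mono fun i hi => hi.enorm.pow_const _)
      (h_bound.mono fun i hi => hi.mono fun x hx =>
        ENNReal.rpow_le_rpow (enorm_le_iff_norm_le.2 (hx.trans (le_abs_self _))) hq.le)
      (lintegral_rpow_enorm_lt_top_of_eLpNorm_lt_top hp0 hp h_bound_memLp.eLpNorm_lt_top).ne
      (h_lim.mono fun x hx => by
        have h := (((ENNReal.continuous_rpow_const (y := p.toReal)).comp
          (continuous_enorm (E := E))).tendsto 0).comp hx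
        simpa only [Function.comp_def, enorm_zero, ENNReal.zero_rpow_of_pos hq] using h)
  have h := ((ENNReal.continuous_rpow_const (y := p.toReal⁻¹)).tendsto 0).comp hlint
  simpa only [Function.comp_def, one_div, ENNReal.zero_rpow_of_pos (inv_pos.2 hq)] using h

theorem MeasureTheory.MemLp.mul_prod_two {α β : Type*} [MeasurableSpace α] [MeasurableSpace β]
    {μ : Measure α} {ν : Measure β} [SFinite ν] {f : α → ℝ} {g : β → ℝ}
    (hf : MemLp f 2 μ) (hg : MemLp g 2 ν) :
    MemLp (fun z : α × β => f z.1 * g z.2) 2 (μ.prod ν) := by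
  refine (memLp_two_iff_integrable_sq (hf.1.comp_fst.mul hg.1.comp_snd)).2 ?_
  simpa [mul_pow] using ((memLp_two_iff_integrable_sq hf.1).1 hf).mul_prod
    ((memLp_two_iff_integrable_sq hg.1).1 hg)

lemma Measurable.intervalIntegral_prod_right {X : Type*} [MeasurableSpace X] {f : X × ℝ → ℝ}
    (hf : Measurable f) (a b : ℝ) : Measurable fun x => ∫ s in a..b, f (x, s) :=
  (hf.stronglyMeasurable.integral_prod_right' (ν := volume.restrict (Ioc a b))).measurable.sub
    (hf.stronglyMeasurable.integral_prod_right' (ν := volume.restrict (Ioc b a))).measurable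

lemma ae_lt_of_mem_uIoc {a b : ℝ} (hab : a ≤ b) : ∀ᵐ u : ℝ, u ∈ uIoc a b → u < b := by
  filter_upwards [Measure.ae_ne volume b] with u hne hu
  rw [uIoc_of_le hab] at hu
  exact hu.2.lt_of_ne hne

section Pospow

variable {x y γ p q c d s u : ℝ}

lemma pospow_of_pos (h : 0 < x) : pospow x γ = x ^ γ := if_pos h

lemma pospow_of_nonpos (h : x ≤ 0) : pospow x γ = 0 := if_neg h.not_gt

lemma pospow_nonneg (x γ : ℝ) : 0 ≤ pospow x γ := by
  unfold pospow; split_ifs with h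
  · exact Real.rpow_nonneg h.le γ
  · exact le_rfl

@[fun_prop]
lemma measurable_pospow (γ : ℝ) : Measurable fun x => pospow x γ :=
  Measurable.ite measurableSet_Ioi (measurable_id.pow_const γ) measurable_const

lemma pospow_le_pospow_of_nonpos (hγ : γ ≤ 0) (hx : 0 < x) (hxy : x ≤ y) :
    pospow y γ ≤ pospow x γ := by
  rw [pospow_of_pos hx, pospow_of_pos (hx.trans_le hxy)]
  exact Real.rpow_le_rpow_of_nonpos hx hxy hγ

lemma abs_sub_rpow_le_pospow (hγ : γ ≤ 0) (hu : u < q) (hs : q ≤ s) :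
    |u - s| ^ γ ≤ pospow (q - u) γ := by
  rw [pospow_of_pos (sub_pos.2 hu), abs_sub_comm, abs_of_pos (by linarith)]
  exact Real.rpow_le_rpow_of_nonpos (sub_pos.2 hu) (by linarith) hγ

lemma pospow_eq_indicator (γ : ℝ) : (fun x => pospow x γ) = (Ioi 0).indicator (· ^ γ) := by
  ext x; by_cases h : 0 < x
  · simp [pospow_of_pos h, h]
  · simp [pospow_of_nonpos (not_lt.1 h), h]

lemma pospow_sq (x γ : ℝ) : pospow x γ ^ 2 = pospow x (2 * γ) := by
  rcases le_or_gt x 0 with hx | hx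
  · simp [pospow_of_nonpos hx]
  · rw [pospow_of_pos hx, pospow_of_pos hx, ← Real.rpow_natCast, ← Real.rpow_mul hx.le]
    ring_nf

lemma intervalIntegrable_pospow (hγ : -1 < γ) (c d : ℝ) :
    IntervalIntegrable (fun x => pospow x γ) volume c d := by
  have h := intervalIntegral.intervalIntegrable_rpow' hγ (a := c) (b := d)
  rw [pospow_eq_indicator]
  exact ⟨h.1.indicator measurableSet_Ioi, h.2.indicator measurableSet_Ioi⟩

lemma intervalIntegrable_pospow_sub (hγ : -1 < γ) (p c d : ℝ) :
    IntervalIntegrable (fun u => pospow (u - p) γ) volume c d := by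
  simpa using (intervalIntegrable_pospow hγ (c - p) (d - p)).comp_sub_right p

lemma intervalIntegrable_pospow_sub_left (hγ : -1 < γ) (q c d : ℝ) :
    IntervalIntegrable (fun u => pospow (q - u) γ) volume c d := by
  simpa using (intervalIntegrable_pospow hγ (q - c) (q - d)).comp_sub_left q

lemma integral_pospow (hγ : -1 < γ) (hc : 0 ≤ c) :
    ∫ x in (0 : ℝ)..c, pospow x γ = c ^ (γ + 1) / (γ + 1) := by
  rw [intervalIntegral.integral_congr_ae (g := (· ^ γ)) (ae_of_all _ fun x hx =>
      pospow_of_pos (by rw [uIoc_of_le hc] at hx; exact hx.1)),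
    integral_rpow (Or.inl hγ), Real.zero_rpow (by linarith), sub_zero]

lemma intervalIntegral_pospow_sub (hγ : -1 < γ) (hpc : p ≤ c) :
    ∫ u in p..c, pospow (u - p) γ = (c - p) ^ (γ + 1) / (γ + 1) := by
  rw [intervalIntegral.integral_comp_sub_right (fun u => pospow u γ), sub_self,
    integral_pospow hγ (sub_nonneg.2 hpc)]

lemma intervalIntegral_pospow_sub_left (hγ : -1 < γ) (hcq : c ≤ q) :
    ∫ u in c..q, pospow (q - u) γ = (q - c) ^ (γ + 1) / (γ + 1) := by
  rw [intervalIntegral.integral_comp_sub_left (fun u => pospow u γ), sub_self,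
    integral_pospow hγ (sub_nonneg.2 hcq)]

lemma memLp_two_pospow_sub_left_restrict_Icc (hγ : -1 < 2 * γ) (p q : ℝ) :
    MemLp (fun y => pospow (q - y) γ) 2 (volume.restrict (Icc p q)) := by
  refine (memLp_two_iff_integrable_sq (Measurable.aestronglyMeasurable (by fun_prop))).2 ?_
  simp_rw [pospow_sq]
  exact (integrableOn_Icc_iff_integrableOn_Ioc).2 (intervalIntegrable_pospow_sub_left hγ q p q).1

lemma memLp_two_pospow_neg_restrict_Iio (hγ : 2 * γ < -1) (hp : p < 0) :
    MemLp (fun y => pospow (-y) γ) 2 (volume.restrict (Iio p)) := by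
  refine (memLp_two_iff_integrable_sq (Measurable.aestronglyMeasurable (by fun_prop))).2 ?_
  simp_rw [pospow_sq]
  have hIoi : IntegrableOn (fun y => pospow y (2 * γ)) (Ioi (-p)) :=
    (integrableOn_Ioi_rpow_of_lt hγ (neg_pos.2 hp)).congr_fun
      (fun y hy => (pospow_of_pos (lt_trans (neg_pos.2 hp) hy)).symm) measurableSet_Ioi
  have hIio := ((Measure.measurePreserving_neg volume).integrableOn_comp_preimage
    (Homeomorph.neg ℝ).measurableEmbedding).2 hIoi
  simp only [neg_preimage, neg_Ioi, neg_neg, Function.comp_def] at hIio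
  exact hIio

end Pospow

section BetaIntegral

variable {a b p q m u : ℝ}

lemma support_pospow_sub_mul_pospow_sub_subset :
    Function.support (fun u => pospow (u - p) a * pospow (q - u) b) ⊆ Ioo p q := by
  intro u hu
  by_contra h
  rcases not_and_or.1 h with h | h <;> apply hu <;> dsimp only
  · rw [pospow_of_nonpos (sub_nonpos.2 (not_lt.1 h)), zero_mul]
  · rw [pospow_of_nonpos (sub_nonpos.2 (not_lt.1 h)), mul_zero]

lemma pospow_sub_mul_pospow_sub_le_left (hb0 : b ≤ 0) (hmq : m < q) (hu : u ≤ m) :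
    pospow (u - p) a * pospow (q - u) b ≤ pospow (q - m) b * pospow (u - p) a := by
  rw [mul_comm]
  exact mul_le_mul_of_nonneg_right
    (pospow_le_pospow_of_nonpos hb0 (sub_pos.2 hmq) (by linarith)) (pospow_nonneg _ _)

lemma pospow_sub_mul_pospow_sub_le_right (ha0 : a ≤ 0) (hpm : p < m) (hu : m ≤ u) :
    pospow (u - p) a * pospow (q - u) b ≤ pospow (m - p) a * pospow (q - u) b :=
  mul_le_mul_of_nonneg_right
    (pospow_le_pospow_of_nonpos ha0 (sub_pos.2 hpm) (by linarith)) (pospow_nonneg _ _)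

lemma intervalIntegrable_pospow_sub_mul_pospow_sub_of_le_left (ha : -1 < a) (hb0 : b ≤ 0)
    (hpm : p ≤ m) (hmq : m < q) :
    IntervalIntegrable (fun u => pospow (u - p) a * pospow (q - u) b) volume p m := by
  refine ((intervalIntegrable_pospow_sub ha p p m).const_mul (pospow (q - m) b)).mono_fun'
    (by fun_prop) (ae_restrict_of_forall_mem measurableSet_uIoc fun u hu => ?_)
  rw [uIoc_of_le hpm] at hu
  dsimp only
  rw [Real.norm_of_nonneg (mul_nonneg (pospow_nonneg _ _) (pospow_nonneg _ _))]
  exact pospow_sub_mul_pospow_sub_le_left hb0 hmq hu.2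

lemma intervalIntegrable_pospow_sub_mul_pospow_sub_of_le_right (hb : -1 < b) (ha0 : a ≤ 0)
    (hpm : p < m) (hmq : m ≤ q) :
    IntervalIntegrable (fun u => pospow (u - p) a * pospow (q - u) b) volume m q := by
  refine ((intervalIntegrable_pospow_sub_left hb q m q).const_mul (pospow (m - p) a)).mono_fun'
    (by fun_prop) (ae_restrict_of_forall_mem measurableSet_uIoc fun u hu => ?_)
  rw [uIoc_of_le hmq] at hu
  dsimp only
  rw [Real.norm_of_nonneg (mul_nonneg (pospow_nonneg _ _) (pospow_nonneg _ _))]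
  exact pospow_sub_mul_pospow_sub_le_right ha0 hpm hu.1.le

lemma intervalIntegrable_pospow_sub_mul_pospow_sub (ha : -1 < a) (hb : -1 < b) (ha0 : a ≤ 0)
    (hb0 : b ≤ 0) (hpq : p < q) :
    IntervalIntegrable (fun u => pospow (u - p) a * pospow (q - u) b) volume p q :=
  (intervalIntegrable_pospow_sub_mul_pospow_sub_of_le_left ha hb0 (by linarith)
    (by linarith : (p + q) / 2 < q)).trans
    (intervalIntegrable_pospow_sub_mul_pospow_sub_of_le_right hb ha0 (by linarith) (by linarith))

lemma integral_eq_intervalIntegral_pospow_sub_mul_pospow_sub (hpq : p ≤ q) :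
    ∫ u, pospow (u - p) a * pospow (q - u) b =
      ∫ u in p..q, pospow (u - p) a * pospow (q - u) b := by
  rw [intervalIntegral.integral_of_le hpq, setIntegral_eq_integral_of_forall_compl_eq_zero]
  exact fun u hu => Function.notMem_support.1 fun h =>
    hu (Ioo_subset_Ioc_self (support_pospow_sub_mul_pospow_sub_subset h))

theorem integrable_pospow_sub_mul_pospow_sub (ha : -1 < a) (hb : -1 < b) (ha0 : a ≤ 0)
    (hb0 : b ≤ 0) (p q : ℝ) :
    Integrable (fun u => pospow (u - p) a * pospow (q - u) b) := by
  rcases lt_or_ge p q with hpq | hqp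
  · rw [← integrableOn_iff_integrable_of_support_subset
      (support_pospow_sub_mul_pospow_sub_subset.trans Ioo_subset_Ioc_self)]
    exact (intervalIntegrable_pospow_sub_mul_pospow_sub ha hb ha0 hb0 hpq).1
  · rw [← integrableOn_iff_integrable_of_support_subset support_pospow_sub_mul_pospow_sub_subset,
      Ioo_eq_empty hqp.not_gt]
    exact integrableOn_empty

lemma intervalIntegral_pospow_sub_mul_pospow_sub_le_left (ha : -1 < a) (hb0 : b ≤ 0)
    (hpm : p ≤ m) (hmq : m < q) :
    ∫ u in p..m, pospow (u - p) a * pospow (q - u) b ≤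
      pospow (q - m) b * ((m - p) ^ (a + 1) / (a + 1)) := by
  rw [← intervalIntegral_pospow_sub ha hpm, ← intervalIntegral.integral_const_mul]
  exact intervalIntegral.integral_mono_on hpm
    (intervalIntegrable_pospow_sub_mul_pospow_sub_of_le_left ha hb0 hpm hmq)
    ((intervalIntegrable_pospow_sub ha p p m).const_mul _)
    fun u hu => pospow_sub_mul_pospow_sub_le_left hb0 hmq hu.2

lemma intervalIntegral_pospow_sub_mul_pospow_sub_le_right (hb : -1 < b) (ha0 : a ≤ 0)
    (hpm : p < m) (hmq : m ≤ q) :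
    ∫ u in m..q, pospow (u - p) a * pospow (q - u) b ≤
      pospow (m - p) a * ((q - m) ^ (b + 1) / (b + 1)) := by
  rw [← intervalIntegral_pospow_sub_left hb hmq, ← intervalIntegral.integral_const_mul]
  exact intervalIntegral.integral_mono_on hmq
    (intervalIntegrable_pospow_sub_mul_pospow_sub_of_le_right hb ha0 hpm hmq)
    ((intervalIntegrable_pospow_sub_left hb q m q).const_mul _)
    fun u hu => pospow_sub_mul_pospow_sub_le_right ha0 hpm hu.1

/-- The left side is `B(a+1, b+1) (q-p)^(a+b+1)` (a Beta integral); the bound comes from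
splitting at the midpoint, where one of the two factors is bounded. -/
theorem integral_pospow_sub_mul_pospow_sub_le (ha : -1 < a) (hb : -1 < b) (ha0 : a ≤ 0)
    (hb0 : b ≤ 0) (hpq : p < q) :
    ∫ u, pospow (u - p) a * pospow (q - u) b ≤
      (1 / (a + 1) + 1 / (b + 1)) * ((q - p) / 2) ^ (a + b + 1) := by
  set m := (p + q) / 2
  set d := (q - p) / 2
  have hd : 0 < d := by simp only [d]; linarith
  have hmp : m - p = d := by simp only [m, d]; ring
  have hqm : q - m = d := by simp only [m, d]; ring
  rw [integral_eq_intervalIntegral_pospow_sub_mul_pospow_sub hpq.le,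
    ← intervalIntegral.integral_add_adjacent_intervals
      (intervalIntegrable_pospow_sub_mul_pospow_sub_of_le_left ha hb0 (b := b) (q := q)
        (by linarith) (by linarith : m < q))
      (intervalIntegrable_pospow_sub_mul_pospow_sub_of_le_right hb ha0 (a := a) (p := p)
        (by linarith : p < m) (by linarith))]
  calc _ ≤ pospow (q - m) b * ((m - p) ^ (a + 1) / (a + 1)) +
        pospow (m - p) a * ((q - m) ^ (b + 1) / (b + 1)) :=
        add_le_add
          (intervalIntegral_pospow_sub_mul_pospow_sub_le_left ha hb0 (by linarith) (by linarith))
          (intervalIntegral_pospow_sub_mul_pospow_sub_le_right hb ha0 (by linarith) (by linarith))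
    _ = (1 / (a + 1) + 1 / (b + 1)) * d ^ (a + b + 1) := by
      rw [hmp, hqm, pospow_of_pos hd, pospow_of_pos hd]
      simp only [Real.rpow_add hd, Real.rpow_one]
      ring

end BetaIntegral

noncomputable def eFactor (H t s y : ℝ) : ℝ :=
  ∫ u in (0:ℝ)..t, pospow (u - y) (H / 2 - 1) * |u - s| ^ (H - 1)

lemma eKer_eq_mul (H t s : ℝ) (x : ℝ × ℝ) :
    eKer H t s x = eFactor H t s x.1 * eFactor H t s x.2 := by
  rw [eFactor, eFactor, ← intervalIntegral.integral_mul_const]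
  refine intervalIntegral.integral_congr fun u _ => ?_
  rw [← intervalIntegral.integral_const_mul]
  exact intervalIntegral.integral_congr fun v _ => by ring

section eFactor

variable {H t s y u : ℝ}

lemma measurable_eFactor (ht : 0 ≤ t) : Measurable fun p : ℝ × ℝ => eFactor H t p.1 p.2 := by
  simp_rw [eFactor, intervalIntegral.integral_of_le ht]
  exact (Measurable.stronglyMeasurable (by fun_prop) :
    StronglyMeasurable fun q : (ℝ × ℝ) × ℝ =>
      pospow (q.2 - q.1.2) (H / 2 - 1) * |q.2 - q.1.1| ^ (H - 1)).integral_prod_right'.measurable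

lemma eFactor_self_eq (hH : H < 1) (ht : 0 ≤ t) (y : ℝ) :
    eFactor H t t y = ∫ u in (0:ℝ)..t, pospow (u - y) (H / 2 - 1) * pospow (t - u) (H - 1) := by
  refine intervalIntegral.integral_congr fun u hu => ?_
  rw [uIcc_of_le ht] at hu
  rcases hu.2.lt_or_eq with hut | rfl
  · rw [abs_sub_comm, abs_of_pos (sub_pos.2 hut), pospow_of_pos (sub_pos.2 hut)]
  · rw [sub_self, abs_zero, Real.zero_rpow (by linarith), pospow_of_nonpos le_rfl]

lemma integrable_eFactor_dominant (hH₀ : 0 < H) (hH₁ : H < 1) (t y : ℝ) :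
    Integrable fun u => pospow (u - y) (H / 2 - 1) * pospow (t - u) (H - 1) :=
  integrable_pospow_sub_mul_pospow_sub (by linarith) (by linarith) (by linarith) (by linarith) y t

lemma norm_eFactor_integrand_le (hH : H < 1) (hu : u < t) (hs : t ≤ s) :
    ‖pospow (u - y) (H / 2 - 1) * |u - s| ^ (H - 1)‖ ≤
      pospow (u - y) (H / 2 - 1) * pospow (t - u) (H - 1) := by
  rw [Real.norm_of_nonneg (mul_nonneg (pospow_nonneg _ _) (by positivity))]
  exact mul_le_mul_of_nonneg_left (abs_sub_rpow_le_pospow (by linarith) hu hs) (pospow_nonneg _ _)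

lemma abs_eFactor_le (hH₀ : 0 < H) (hH₁ : H < 1) (ht : 0 ≤ t) (hs : t ≤ s) (y : ℝ) :
    |eFactor H t s y| ≤ eFactor H t t y := by
  rw [eFactor_self_eq hH₁ ht, ← Real.norm_eq_abs, eFactor]
  refine intervalIntegral.norm_integral_le_of_norm_le ht ?_
    (integrable_eFactor_dominant hH₀ hH₁ t y).intervalIntegrable
  filter_upwards [ae_lt_of_mem_uIoc ht] with u hu hmem
  exact norm_eFactor_integrand_le hH₁ (hu (by rwa [uIoc_of_le ht])) hs

lemma continuousOn_eFactor (hH₀ : 0 < H) (hH₁ : H < 1) (ht : 0 ≤ t) (y : ℝ) :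
    ContinuousOn (fun s => eFactor H t s y) (Ici t) := by
  intro s₀ hs₀
  refine intervalIntegral.continuousWithinAt_of_dominated_interval
    (Eventually.of_forall fun s => Measurable.aestronglyMeasurable (by fun_prop))
    (eventually_nhdsWithin_of_forall fun s hs => ?_)
    (integrable_eFactor_dominant hH₀ hH₁ t y).intervalIntegrable ?_
  · filter_upwards [ae_lt_of_mem_uIoc ht] with u hu hmem
    exact norm_eFactor_integrand_le hH₁ (hu hmem) hs
  · filter_upwards [ae_lt_of_mem_uIoc ht] with u hu hmem
    have hne : |u - s₀| ≠ 0 := abs_ne_zero.2 (sub_ne_zero.2 ((hu hmem).trans_le hs₀).ne)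
    exact (continuousAt_const.mul ((continuousAt_const.sub continuousAt_id).abs.rpow_const
      (Or.inl hne))).continuousWithinAt

lemma eFactor_self_le_integral (hH₀ : 0 < H) (hH₁ : H < 1) (ht : 0 ≤ t) (y : ℝ) :
    eFactor H t t y ≤ ∫ u, pospow (u - y) (H / 2 - 1) * pospow (t - u) (H - 1) := by
  rw [eFactor_self_eq hH₁ ht, intervalIntegral.integral_of_le ht]
  exact setIntegral_le_integral (integrable_eFactor_dominant hH₀ hH₁ t y)
    (ae_of_all _ fun u => mul_nonneg (pospow_nonneg _ _) (pospow_nonneg _ _))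

lemma eFactor_self_le_of_lt (hH₀ : 0 < H) (hH₁ : H < 1) (ht : 0 ≤ t) (hy : y < t) :
    eFactor H t t y ≤
      (1 / (H / 2) + 1 / H) / 2 ^ (3 * H / 2 - 1) * pospow (t - y) (3 * H / 2 - 1) := by
  have h := integral_pospow_sub_mul_pospow_sub_le (a := H / 2 - 1) (b := H - 1) (by linarith)
    (by linarith) (by linarith) (by linarith) hy
  rw [pospow_of_pos (sub_pos.2 hy), mul_comm_div, ← Real.div_rpow (sub_pos.2 hy).le zero_le_two]
  refine ((eFactor_self_le_integral hH₀ hH₁ ht y).trans h).trans_eq ?_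
  rw [show H / 2 - 1 + 1 = H / 2 by ring, show H - 1 + 1 = H by ring,
    show H / 2 - 1 + (H - 1) + 1 = 3 * H / 2 - 1 by ring]

lemma eFactor_self_le_of_neg (hH₀ : 0 < H) (hH₁ : H < 1) (ht : 0 ≤ t) (hy : y < 0) :
    eFactor H t t y ≤ t ^ H / H * pospow (-y) (H / 2 - 1) := calc
  _ ≤ ∫ u in (0:ℝ)..t, pospow (-y) (H / 2 - 1) * pospow (t - u) (H - 1) := by
    rw [eFactor_self_eq hH₁ ht]
    refine intervalIntegral.integral_mono_on ht
      (integrable_eFactor_dominant hH₀ hH₁ t y).intervalIntegrable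
      ((intervalIntegrable_pospow_sub_left (by linarith) t 0 t).const_mul _) fun u hu => ?_
    exact mul_le_mul_of_nonneg_right (pospow_le_pospow_of_nonpos (by linarith) (by linarith)
      (by linarith [hu.1])) (pospow_nonneg _ _)
  _ = t ^ H / H * pospow (-y) (H / 2 - 1) := by
    rw [intervalIntegral.integral_const_mul, intervalIntegral_pospow_sub_left (by linarith) ht,
      sub_zero, sub_add_cancel, mul_comm]

lemma eFactor_self_eq_zero_of_le (hH₀ : 0 < H) (hH₁ : H < 1) (ht : 0 ≤ t) (hy : t ≤ y) :
    eFactor H t t y = 0 := by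
  refine le_antisymm ((eFactor_self_le_integral hH₀ hH₁ ht y).trans_eq ?_)
    ((abs_nonneg _).trans (abs_eFactor_le hH₀ hH₁ ht le_rfl y))
  rw [← integral_zero ℝ ℝ]
  refine integral_congr_ae (ae_of_all _ fun u => Function.notMem_support.1 fun h => ?_)
  exact (Ioo_eq_empty (not_lt.2 hy)).subset (support_pospow_sub_mul_pospow_sub_subset h)

/-- The dominating function uses `eFactor_self_le_of_lt` on `[-t, t]` and `eFactor_self_le_of_neg`
on `(-∞, -t)`; the two pieces are square integrable exactly when `1/3 < H < 1`. -/
theorem memLp_eFactor_self (hH₀ : 1 / 3 < H) (hH₁ : H < 1) (ht : 0 < t) :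
    MemLp (eFactor H t t) 2 volume := by
  set C := (1 / (H / 2) + 1 / H) / 2 ^ (3 * H / 2 - 1)
  set D : ℝ → ℝ := fun y =>
    (Icc (-t) t).indicator (fun y => C * pospow (t - y) (3 * H / 2 - 1)) y +
      (Iio (-t)).indicator (fun y => t ^ H / H * pospow (-y) (H / 2 - 1)) y
  have hD : MemLp D 2 volume :=
    ((memLp_indicator_iff_restrict measurableSet_Icc).2
      ((memLp_two_pospow_sub_left_restrict_Icc (by linarith) _ _).const_mul C)).add
    ((memLp_indicator_iff_restrict measurableSet_Iio).2
      ((memLp_two_pospow_neg_restrict_Iio (by linarith) (by linarith)).const_mul _))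
  refine hD.of_le ((measurable_eFactor ht.le).comp measurable_prodMk_left).aestronglyMeasurable
    (ae_of_all _ fun y => ?_)
  have hG := (abs_nonneg _).trans (abs_eFactor_le (by linarith) hH₁ ht.le le_rfl y)
  have hD₁ := indicator_nonneg (s := Icc (-t) t)
    (fun y _ => mul_nonneg (by positivity : 0 ≤ C) (pospow_nonneg (t - y) (3 * H / 2 - 1))) y
  have hD₂ := indicator_nonneg (s := Iio (-t))
    (fun y _ => mul_nonneg (by positivity : 0 ≤ t ^ H / H) (pospow_nonneg (-y) (H / 2 - 1))) y
  rw [Real.norm_of_nonneg hG, Real.norm_of_nonneg (add_nonneg hD₁ hD₂)]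
  rcases lt_or_ge y (-t) with hyt | hyt
  · rw [indicator_of_mem (mem_Iio.2 hyt)]
    exact (eFactor_self_le_of_neg (by linarith) hH₁ ht.le (by linarith)).trans
      (le_add_of_nonneg_left hD₁)
  rcases lt_or_ge y t with hyt' | hyt'
  · rw [indicator_of_mem (mem_Icc.2 ⟨hyt, hyt'.le⟩)]
    exact (eFactor_self_le_of_lt (by linarith) hH₁ ht.le hyt').trans (le_add_of_nonneg_right hD₂)
  · rw [eFactor_self_eq_zero_of_le (by linarith) hH₁ ht.le hyt']
    exact add_nonneg hD₁ hD₂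

end eFactor

section eKer

variable {H t s : ℝ}

lemma measurable_eKer (ht : 0 ≤ t) : Measurable fun q : (ℝ × ℝ) × ℝ => eKer H t q.2 q.1 := by
  simp_rw [eKer_eq_mul]
  exact ((measurable_eFactor ht).comp (measurable_snd.prodMk measurable_fst.fst)).mul
    ((measurable_eFactor ht).comp (measurable_snd.prodMk measurable_fst.snd))

lemma abs_eKer_le (hH₀ : 0 < H) (hH₁ : H < 1) (ht : 0 ≤ t) (hs : t ≤ s) (x : ℝ × ℝ) :
    |eKer H t s x| ≤ eFactor H t t x.1 * eFactor H t t x.2 := by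
  rw [eKer_eq_mul, abs_mul]
  exact mul_le_mul (abs_eFactor_le hH₀ hH₁ ht hs _) (abs_eFactor_le hH₀ hH₁ ht hs _)
    (abs_nonneg _) ((abs_nonneg _).trans (abs_eFactor_le hH₀ hH₁ ht le_rfl _))

lemma continuousOn_eKer (hH₀ : 0 < H) (hH₁ : H < 1) (ht : 0 ≤ t) (x : ℝ × ℝ) :
    ContinuousOn (fun s => eKer H t s x) (Ici t) := by
  simp_rw [eKer_eq_mul]
  exact (continuousOn_eFactor hH₀ hH₁ ht x.1).mul (continuousOn_eFactor hH₀ hH₁ ht x.2)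

end eKer

theorem eKer_average_tendsto_L2 (H : ℝ) (hH : H ∈ Set.Ioo (1/2 : ℝ) 1) (t : ℝ) (ht : 0 < t) :
    MemLp (eKer H t t) 2 (volume : Measure (ℝ × ℝ)) ∧
    Tendsto (fun ε : ℝ =>
        eLpNorm (fun x : ℝ × ℝ =>
          (1 / ε) * (∫ s in t..(t + ε), eKer H t s x) - eKer H t t x) 2
          (volume : Measure (ℝ × ℝ)))
      (nhdsWithin 0 (Set.Ioi 0)) (nhds 0) := by
  obtain ⟨hH₀, hH₁⟩ := hH
  have hGG : MemLp (fun x : ℝ × ℝ => eFactor H t t x.1 * eFactor H t t x.2) 2 volume := by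
    have hG := memLp_eFactor_self (by linarith) hH₁ ht
    rw [Measure.volume_eq_prod]
    exact hG.mul_prod_two hG
  have hmeas : ∀ ε : ℝ, Measurable fun x : ℝ × ℝ =>
      (1 / ε) * (∫ s in t..(t + ε), eKer H t s x) - eKer H t t x := fun ε =>
    (((measurable_eKer ht.le).intervalIntegral_prod_right _ _).const_mul _).sub
      ((measurable_eKer ht.le).comp (f := fun x : ℝ × ℝ => (x, t)) (by fun_prop))
  refine ⟨(funext (eKer_eq_mul H t t) : eKer H t t = _) ▸ hGG, ?_⟩
  exact tendsto_eLpNorm_of_dominated ENNReal.ofNat_ne_top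
    (eventually_nhdsWithin_of_forall fun ε _ => (hmeas ε).aestronglyMeasurable)
    (eventually_nhdsWithin_of_forall fun ε hε => ae_of_all _ fun x =>
      abs_average_sub_le hε (fun s hs => abs_eKer_le (by linarith) hH₁ ht.le hs.1.le x)
        (abs_eKer_le (by linarith) hH₁ ht.le le_rfl x))
    (hGG.const_mul 2) (ae_of_all _ fun x =>
      tendsto_average_sub_of_continuousOn (continuousOn_eKer (by linarith) hH₁ ht.le x))
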